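/- Let V be a finite-dimensional vector space with a nondegenerate symmetric bilinear form B over an algebraically closed field of characteristic 0, and let f ∈ so(V,B) be nilpotent (i.e. f is B-skew and nilpotent as an endomorphism). Then for every even m, the number of Jordan blocks of f of size m is even. -/

import Mathlib

/-!
For odd `k` the form `(v, w) ↦ B (f^k v) w` is skew-symmetric and, `B` being nondegenerate,
has kernel `ker f^k`; a skew-symmetric form has even rank (in odd dimension
`det M = det Mᵀ = -det M`), so `rank f^k` is even. In the rank formula for the number of
blocks of even size `m` the exponents `m ± 1` are odd, and the remaining term is `2 rank f^m`.
-/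

open Module

/-- The number of Jordan blocks of size m of a nilpotent endomorphism f, computed from the
standard rank formula: #blocks of size m = rank f^(m-1) − 2 rank f^m + rank f^(m+1). -/
noncomputable def jordanBlockCount {F V : Type*} [Field F] [AddCommGroup V] [Module F V]
    (f : Module.End F V) (m : ℕ) : ℕ :=
  Module.finrank F (LinearMap.range (f ^ (m - 1)))
    + Module.finrank F (LinearMap.range (f ^ (m + 1)))
    - 2 * Module.finrank F (LinearMap.range (f ^ m))

namespace LinearMap

theorem IsAdjointPair.pow {R M N : Type*} [CommSemiring R] [AddCommMonoid M] [Module R M]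
    [AddCommMonoid N] [Module R N] {B : M →ₗ[R] M →ₗ[R] N} {f g : Module.End R M}
    (h : IsAdjointPair B B f g) (n : ℕ) : IsAdjointPair B B ⇑(f ^ n) ⇑(g ^ n) := by
  induction n with
  | zero => exact fun _ _ ↦ rfl
  | succ n ih => rw [pow_succ, pow_succ']; exact ih.mul h

end LinearMap

namespace LinearMap.BilinForm

variable {F V : Type*} [Field F] [AddCommGroup V] [Module F V] [FiniteDimensional F V]

theorem even_finrank_of_nondegenerate_of_skew [NeZero (2 : F)] {C : LinearMap.BilinForm F V}
    (hskew : ∀ v w, C v w = -C w v) (hC : C.Nondegenerate) : Even (finrank F V) := by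
  by_contra hodd
  let b := finBasis F V
  let M := toMatrix b C
  have hMt : M.transpose = -M := by
    ext i j
    simpa [M, toMatrix_apply] using hskew (b j) (b i)
  have hdet : M.det = -M.det := by
    conv_lhs => rw [← Matrix.det_transpose, hMt, Matrix.det_neg, Fintype.card_fin,
      (Nat.not_even_iff_odd.mp hodd).neg_one_pow, neg_one_mul]
  have h2det : (2 : F) * M.det = 0 := by linear_combination hdet
  exact (nondegenerate_iff_det_ne_zero b).mp hC
    ((mul_eq_zero.mp h2det).resolve_left two_ne_zero)

theorem even_finrank_range_of_skew [NeZero (2 : F)] {C : LinearMap.BilinForm F V}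
    (hskew : ∀ v w, C v w = -C w v) : Even (finrank F (LinearMap.range C)) := by
  obtain ⟨W, hW⟩ := Submodule.exists_isCompl (LinearMap.ker C)
  have hrefl : C.IsRefl := fun v w h ↦ by rw [hskew, h, neg_zero]
  have hdisj : Disjoint W (C.orthogonal W) := by
    refine Submodule.disjoint_def.mpr fun w hwW hwo ↦ ?_
    have hker : w ∈ LinearMap.ker C := by
      ext v
      have hv : v ∈ LinearMap.ker C ⊔ W := hW.sup_eq_top ▸ Submodule.mem_top
      obtain ⟨x, hx, y, hy, rfl⟩ := Submodule.mem_sup.mp hv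
      rw [LinearMap.mem_ker] at hx
      simp [hskew w, hx, (mem_orthogonal_iff.mp hwo) y hy]
    exact Submodule.disjoint_def.mp hW.disjoint w hker hwW
  have hrank : finrank F (LinearMap.range C) = finrank F W := by
    have := C.finrank_range_add_finrank_ker
    have := Submodule.finrank_add_eq_of_isCompl hW
    omega
  rw [hrank]
  exact even_finrank_of_nondegenerate_of_skew (fun v w ↦ hskew v w)
    (C.nondegenerate_restrict_of_disjoint_orthogonal hrefl hdisj)

theorem even_finrank_range_pow_of_odd [NeZero (2 : F)] {B : LinearMap.BilinForm F V}
    (hsymm : ∀ v w, B v w = B w v) (hB : B.SeparatingLeft) {f : Module.End F V}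
    (hf : IsAdjointPair B B f ⇑(-f)) {k : ℕ} (hk : Odd k) :
    Even (finrank F (LinearMap.range (f ^ k))) := by
  set C : LinearMap.BilinForm F V := B ∘ₗ f ^ k
  have hCskew : ∀ v w, C v w = -C w v := fun v w ↦ by
    change B ((f ^ k) v) w = -B ((f ^ k) w) v
    rw [hf.pow k, hk.neg_pow, LinearMap.neg_apply, map_neg, hsymm]
  have hker : LinearMap.ker C = LinearMap.ker (f ^ k) :=
    LinearMap.ker_comp_of_ker_eq_bot _ (separatingLeft_iff_ker_eq_bot.mp hB)
  have hrank : finrank F (LinearMap.range C) = finrank F (LinearMap.range (f ^ k)) := by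
    have := hker ▸ C.finrank_range_add_finrank_ker
    have := (f ^ k).finrank_range_add_finrank_ker
    omega
  exact hrank ▸ even_finrank_range_of_skew hCskew

end LinearMap.BilinForm

theorem orthogonal_nilpotent_even_blocks_even_multiplicity_general
    {F : Type*} [Field F] [CharZero F]
    {V : Type*} [AddCommGroup V] [Module F V] [FiniteDimensional F V]
    (B : LinearMap.BilinForm F V)
    (hsymm : ∀ v w, B v w = B w v)
    (hnd : ∀ v, (∀ w, B v w = 0) → v = 0)
    (f : Module.End F V)
    (hskew : ∀ v w, B (f v) w + B v (f w) = 0) :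
    ∀ m : ℕ, 1 ≤ m → Even m → Even (jordanBlockCount f m) := by
  have hf : LinearMap.IsAdjointPair B B f ⇑(-f) := fun v w ↦ by
    rw [LinearMap.neg_apply, map_neg, eq_neg_iff_add_eq_zero, hskew]
  intro m hm hmeven
  have hodd_pred : Odd (m - 1) := Nat.Even.sub_odd hm hmeven odd_one
  have hodd_succ : Odd (m + 1) := hmeven.add_one
  exact ((LinearMap.BilinForm.even_finrank_range_pow_of_odd hsymm hnd hf hodd_pred).add
    (LinearMap.BilinForm.even_finrank_range_pow_of_odd hsymm hnd hf hodd_succ)).tsub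
    (even_two_mul _)

/-- For a nilpotent element f of so(V,B) (B nondegenerate symmetric), every even Jordan
block size occurs with even multiplicity. -/
theorem orthogonal_nilpotent_even_blocks_even_multiplicity
    {F : Type*} [Field F] [IsAlgClosed F] [CharZero F]
    {V : Type*} [AddCommGroup V] [Module F V] [FiniteDimensional F V]
    (B : LinearMap.BilinForm F V)
    (hsymm : ∀ v w, B v w = B w v)
    (hnd : ∀ v, (∀ w, B v w = 0) → v = 0)
    (f : Module.End F V)
    (hskew : ∀ v w, B (f v) w + B v (f w) = 0)
    (hnil : IsNilpotent f) :
    ∀ m : ℕ, 1 ≤ m → Even m → Even (jordanBlockCount f m) :=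
  orthogonal_nilpotent_even_blocks_even_multiplicity_general B hsymm hnd f hskew
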